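/- Split conformal prediction is valid: let (X_1,Y_1), ..., (X_n,Y_n), (X_{n+1},Y_{n+1}) be exchangeable random pairs in X × Y with Y finite, let s : X × Y → ℝ be any measurable score function, and define the prediction set C(x) = { y ∈ Y : s(x,y) ≤ Q_α } where Q_α is the ⌈(1-α)(n+1)⌉-th smallest element of {s(X_1,Y_1), ..., s(X_n,Y_n)} ∪ {∞}. Then P[Y_{n+1} ∈ C(X_{n+1})] ≥ 1 - α. -/

import Mathlib

/-!
Call the rank of the `i`-th score the number of scores strictly below it, and let
`k = ⌈(1 - α)(n + 1)⌉`. By exchangeability the `n + 1` events `{rank i < k}` all have the same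
probability, and in every outcome at least `k` of them occur. Hence
`(n + 1) ℙ(rank (n + 1) < k) ≥ k ≥ (1 - α)(n + 1)`. The test point lies in the prediction set
exactly when its rank is `< k`: the `k`-th smallest of the calibration scores and `∞` is at least
`c` iff fewer than `k` of them lie strictly below `c`, and `∞` never does.
-/

open MeasureTheory ProbabilityTheory

/-- The `k`-th smallest element of a finite multiset of extended reals
(i.e. the `k`-th order statistic, 1-indexed). -/
noncomputable def kthSmallest (s : Multiset EReal) (k : ℕ) : EReal :=
  (s.sort (· ≤ ·)).getD (k - 1) ⊤

/-- A finite family of random variables is exchangeable if its joint law is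
invariant under every permutation of the indices. -/
def Exchangeable {Ω : Type*} [MeasureSpace Ω] {m : ℕ} {E : Type*} [MeasurableSpace E]
    (s : Fin m → Ω → E) : Prop :=
  ∀ π : Equiv.Perm (Fin m),
    Measure.map (fun ω i => s (π i) ω) (ℙ : Measure Ω) =
      Measure.map (fun ω i => s i ω) (ℙ : Measure Ω)

open scoped ENNReal

theorem List.Pairwise.le_getD_top_iff_countP_lt_le {β : Type*} [LinearOrder β] [OrderTop β]
    {l : List β} (hl : l.Pairwise (· ≤ ·)) (c : β) (i : ℕ) :
    c ≤ l.getD i ⊤ ↔ l.countP (· < c) ≤ i := by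
  induction l generalizing i with
  | nil => simp
  | cons a t ih =>
    obtain ⟨ha, ht⟩ := List.pairwise_cons.1 hl
    rw [List.countP_cons]
    by_cases hac : a < c
    · cases i with
      | zero => exact iff_of_false (by simpa using hac) (by simp [hac])
      | succ j => simpa [hac] using ih ht j
    · have hc : ∀ x ∈ a :: t, c ≤ x := fun x hx =>
        (not_lt.1 hac).trans ((List.mem_cons.1 hx).elim ge_of_eq (ha x))
      have hca : c ≤ (a :: t).getD i ⊤ := by
        rw [List.getD_eq_getElem?_getD]
        cases h : (a :: t)[i]? with
        | none => exact le_top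
        | some x => exact hc x (List.mem_of_getElem? h)
      have hzero : t.countP (· < c) = 0 :=
        List.countP_eq_zero.2 fun x hx => by simpa using hc x (List.mem_cons_of_mem a hx)
      exact iff_of_true hca (by simp [hzero, hac])

theorem le_kthSmallest_iff (M : Multiset EReal) {k : ℕ} (hk : 0 < k) (c : EReal) :
    c ≤ kthSmallest M k ↔ M.countP (· < c) < k := by
  rw [kthSmallest, (Multiset.pairwise_sort M _).le_getD_top_iff_countP_lt_le,
    ← Multiset.coe_countP, Multiset.sort_eq]
  omega

section strictRank

variable {ι β : Type*} [Fintype ι] [LinearOrder β]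

def strictRank (g : ι → β) (i : ι) : ℕ :=
  (Finset.univ.filter fun j => g j < g i).card

theorem strictRank_comp_equiv (g : ι → β) (π : ι ≃ ι) (i : ι) :
    strictRank (g ∘ π) i = strictRank g (π i) :=
  Finset.card_bij' (fun j _ => π j) (fun j _ => π.symm j) (by simp) (by simp) (by simp) (by simp)

theorem le_card_strictRank_lt (g : ι → β) {k : ℕ} (hk : k ≤ Fintype.card ι) :
    k ≤ (Finset.univ.filter fun i => strictRank g i < k).card := by
  have hcard := Finset.card_filter_add_card_filter_not (s := Finset.univ)
    fun i => strictRank g i < k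
  set S := Finset.univ.filter fun i => strictRank g i < k
  by_contra! hS
  -- a `g`-minimal index of rank `≥ k` only has indices of rank `< k` strictly below it
  obtain ⟨i, hi, hmin⟩ : ∃ i ∉ S, ∀ j ∉ S, g i ≤ g j := by
    have hT : (Finset.univ.filter fun i => ¬strictRank g i < k).Nonempty := by
      rw [← Finset.card_pos]
      rw [Finset.card_univ] at hcard
      omega
    obtain ⟨i, hi, hmin⟩ := Finset.exists_min_image _ g hT
    exact ⟨i, by simpa [S] using hi, fun j hj => hmin j (by simpa [S] using hj)⟩
  have hsub : (Finset.univ.filter fun j => g j < g i) ⊆ S := fun j hj => by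
    by_contra hjS
    exact (Finset.mem_filter.1 hj).2.not_ge (hmin j hjS)
  exact hi (Finset.mem_filter.2 ⟨Finset.mem_univ i, (Finset.card_le_card hsub).trans_lt hS⟩)

theorem strictRank_last {n : ℕ} (g : Fin (n + 1) → β) :
    strictRank g (Fin.last n) =
      (Finset.univ.filter fun i : Fin n => g i.castSucc < g (Fin.last n)).card := by
  rw [strictRank, Finset.card_filter, Fin.sum_univ_castSucc, ← Finset.card_filter]
  simp

theorem measurable_strictRank {Ω : Type*} [MeasurableSpace Ω] [TopologicalSpace β]
    [MeasurableSpace β] [OpensMeasurableSpace β] [OrderClosedTopology β]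
    [SecondCountableTopology β] {g : Ω → ι → β} (hg : ∀ j, Measurable fun ω => g ω j)
    (i : ι) : Measurable fun ω => strictRank (g ω) i := by
  simp only [strictRank, Finset.card_filter]
  exact Finset.measurable_sum _ fun j _ =>
    Measurable.ite (measurableSet_lt (hg j) (hg i)) measurable_const measurable_const

end strictRank

theorem Multiset.countP_ofFn {β : Type*} {m : ℕ} (f : Fin m → β) (p : β → Prop)
    [DecidablePred p] :
    (List.ofFn f : Multiset β).countP p = (Finset.univ.filter fun i => p (f i)).card := by
  rw [List.ofFn_eq_map, ← Multiset.map_coe, Multiset.countP_map]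
  rfl

theorem coe_last_le_kthSmallest_iff {n k : ℕ} (hk : 0 < k) (g : Fin (n + 1) → ℝ) :
    (g (Fin.last n) : EReal) ≤
        kthSmallest ((List.ofFn fun i : Fin n => (g i.castSucc : EReal)) + {⊤}) k ↔
      strictRank g (Fin.last n) < k := by
  have htop : Multiset.countP (· < (g (Fin.last n) : EReal)) {⊤} = 0 :=
    Multiset.countP_eq_zero.2 (by simp)
  rw [le_kthSmallest_iff _ hk, Multiset.countP_add, htop, add_zero, Multiset.countP_ofFn,
    strictRank_last]
  simp only [EReal.coe_lt_coe_iff]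

theorem Exchangeable.measure_perm_preimage {Ω E : Type*} [MeasureSpace Ω] [MeasurableSpace E]
    {m : ℕ} {Z : Fin m → Ω → E} (hZ : Exchangeable Z) (hmeas : ∀ i, Measurable (Z i))
    (π : Equiv.Perm (Fin m)) {B : Set (Fin m → E)} (hB : MeasurableSet B) :
    ℙ ((fun ω i => Z (π i) ω) ⁻¹' B) = ℙ ((fun ω i => Z i ω) ⁻¹' B) := by
  rw [← Measure.map_apply (measurable_pi_lambda _ fun i => hmeas (π i)) hB, hZ π,
    Measure.map_apply (measurable_pi_lambda _ hmeas) hB]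

theorem Exchangeable.measure_strictRank_lt_eq {Ω E β : Type*} [MeasureSpace Ω]
    [MeasurableSpace E] [LinearOrder β] [TopologicalSpace β] [MeasurableSpace β]
    [OpensMeasurableSpace β] [OrderClosedTopology β] [SecondCountableTopology β] {m : ℕ}
    {Z : Fin m → Ω → E} (hZ : Exchangeable Z) (hmeas : ∀ i, Measurable (Z i)) {f : E → β}
    (hf : Measurable f) (k : ℕ) (i j : Fin m) :
    ℙ {ω | strictRank (fun l => f (Z l ω)) i < k} =
      ℙ {ω | strictRank (fun l => f (Z l ω)) j < k} := by
  set B := {v : Fin m → E | strictRank (fun l => f (v l)) j < k}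
  have hB : MeasurableSet B := measurableSet_lt
    (measurable_strictRank (g := fun (v : Fin m → E) l => f (v l)) (fun _ => by fun_prop) j)
    measurable_const
  have hi : {ω | strictRank (fun l => f (Z l ω)) i < k} =
      (fun ω l => Z (Equiv.swap j i l) ω) ⁻¹' B := by
    ext ω
    change _ ↔ strictRank ((fun l => f (Z l ω)) ∘ Equiv.swap j i) j < k
    rw [strictRank_comp_equiv, Equiv.swap_apply_left]
    exact Iff.rfl
  rw [hi, hZ.measure_perm_preimage hmeas _ hB]
  rfl

open Classical in
theorem le_sum_measure_of_le_card_mem {Ω ι : Type*} [MeasurableSpace Ω] [Fintype ι]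
    {μ : Measure Ω} {A : ι → Set Ω} (hA : ∀ i, MeasurableSet (A i)) {k : ℕ}
    (hk : ∀ ω, k ≤ (Finset.univ.filter fun i => ω ∈ A i).card) :
    k * μ Set.univ ≤ ∑ i, μ (A i) :=
  calc k * μ Set.univ = ∫⁻ _, (k : ℝ≥0∞) ∂μ := by simp
    _ ≤ ∫⁻ ω, ∑ i, (A i).indicator 1 ω ∂μ := lintegral_mono fun ω => by
        simpa [Set.indicator_apply, Finset.sum_boole] using hk ω
    _ = ∑ i, μ (A i) := by
        rw [lintegral_finsetSum _ fun i _ => measurable_one.indicator (hA i)]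
        simp_rw [lintegral_indicator_one (hA _)]

theorem stmt4_general {Ω : Type*} [MeasureSpace Ω] [IsProbabilityMeasure (ℙ : Measure Ω)]
    {X Y : Type*} [MeasurableSpace X] [MeasurableSpace Y]
    (n : ℕ) (Z : Fin (n + 1) → Ω → X × Y)
    (hmeas : ∀ i, Measurable (Z i)) (hexch : Exchangeable Z)
    (s : X × Y → ℝ) (hs : Measurable s)
    (α : ℝ) (hα : α ∈ Set.Ioo (0 : ℝ) 1)
    -- conformal prediction set: `C ω x = {y : s(x,y) ≤ Q_α(calibration scores of ω)}`
    (C : Ω → X → Set Y)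
    (hC : ∀ ω x, C ω x =
      {y : Y | (s (x, y) : EReal) ≤
        kthSmallest
          ((Multiset.ofList (List.ofFn fun i : Fin n => ((s (Z i.castSucc ω) : ℝ) : EReal)))
            + {⊤})
          ⌈(1 - α) * (n + 1)⌉₊}) :
    ENNReal.ofReal (1 - α) ≤
      ℙ {ω | (Z (Fin.last n) ω).2 ∈ C ω (Z (Fin.last n) ω).1} := by
  obtain ⟨hα0, hα1⟩ := hα
  set k := ⌈(1 - α) * (n + 1)⌉₊
  have hk_pos : 0 < k := Nat.ceil_pos.2 (mul_pos (by linarith) (by positivity))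
  have hk_le : k ≤ n + 1 := Nat.ceil_le.2 (by push_cast; nlinarith)
  set A : Fin (n + 1) → Set Ω := fun i => {ω | strictRank (fun j => s (Z j ω)) i < k}
  have hevent : {ω | (Z (Fin.last n) ω).2 ∈ C ω (Z (Fin.last n) ω).1} = A (Fin.last n) := by
    ext ω
    simp only [Set.mem_ofPred_eq, hC]
    exact coe_last_le_kthSmallest_iff hk_pos (fun j => s (Z j ω))
  have hrank_eq : ∀ i, ℙ (A i) = ℙ (A (Fin.last n)) :=
    fun i => hexch.measure_strictRank_lt_eq hmeas hs k i _
  have hcover : (k : ℝ≥0∞) ≤ (n + 1) * ℙ (A (Fin.last n)) := by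
    have hA : ∀ i, MeasurableSet (A i) := fun i =>
      measurableSet_lt (measurable_strictRank (fun j => hs.comp (hmeas j)) i) measurable_const
    simpa [hrank_eq] using le_sum_measure_of_le_card_mem (μ := ℙ) hA fun ω => by
      simpa [A] using le_card_strictRank_lt (fun j => s (Z j ω)) (k := k) (by simpa using hk_le)
  rw [hevent, ← ENNReal.mul_le_mul_iff_left (c := n + 1) (by simp) (by simp)]
  calc ENNReal.ofReal (1 - α) * (n + 1) = ENNReal.ofReal ((1 - α) * (n + 1)) := by
        rw [ENNReal.ofReal_mul (by linarith)]; norm_cast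
    _ ≤ k := ENNReal.ofReal_le_of_le_toReal (by simpa using Nat.le_ceil _)
    _ ≤ ℙ (A (Fin.last n)) * (n + 1) := by rwa [mul_comm]

theorem stmt4 {Ω : Type*} [MeasureSpace Ω] [IsProbabilityMeasure (ℙ : Measure Ω)]
    {X Y : Type*} [MeasurableSpace X] [MeasurableSpace Y] [Fintype Y]
    (n : ℕ) (Z : Fin (n + 1) → Ω → X × Y)
    (hmeas : ∀ i, Measurable (Z i)) (hexch : Exchangeable Z)
    (s : X × Y → ℝ) (hs : Measurable s)
    (α : ℝ) (hα : α ∈ Set.Ioo (0 : ℝ) 1)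
    -- conformal prediction set: `C ω x = {y : s(x,y) ≤ Q_α(calibration scores of ω)}`
    (C : Ω → X → Set Y)
    (hC : ∀ ω x, C ω x =
      {y : Y | (s (x, y) : EReal) ≤
        kthSmallest
          ((Multiset.ofList (List.ofFn fun i : Fin n => ((s (Z i.castSucc ω) : ℝ) : EReal)))
            + {⊤})
          ⌈(1 - α) * (n + 1)⌉₊}) :
    ENNReal.ofReal (1 - α) ≤
      ℙ {ω | (Z (Fin.last n) ω).2 ∈ C ω (Z (Fin.last n) ω).1} :=
  stmt4_general n Z hmeas hexch s hs α hα C hC
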